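/- Let (x_i, y_i) ∈ ℝ² × ℝ², i = 1,…,m, be given. The following are equivalent: (1) there exist COINCIDENT cameras P₁, P₂ and points w_i ∈ ℝ⁴∖{0} forming a reconstruction of {(x_i,y_i)}; (2) there exist coincident finite cameras P₁, P₂ and points w_i ∈ ℝ⁴∖{0} forming a reconstruction; (3) there exist coincident finite cameras P₁, P₂ and points w_i ∈ ℝ³ such that (P₁,P₂,{ŵ_i}) is a reconstruction; (4) there exist a finite camera P₂ coincident with P₁ = (I 0) and points w_i ∈ ℝ³ such that (P₁,P₂,{ŵ_i}) is a reconstruction. -/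

import Mathlib

/-! A camera of rank 3 has a one-dimensional kernel, so a second camera sharing a nonzero kernel
vector with it vanishes on that whole kernel and factors as `P₂ = B P₁`; `B` is invertible because
`P₂` is onto. A reconstruction by `P₁, P₂` with points `wᵢ` is therefore also one by the finite
cameras `(I 0)` and `(B 0)`, which share the centre `(0,0,0,1)`, with the affine points `P₁ wᵢ`.
The other implications are specialisations. -/

open Matrix

noncomputable section

/-- For `u ∈ ℝⁿ`, `hat u = (u, 1)ᵀ ∈ ℝⁿ⁺¹`. -/
def hat {n : ℕ} (u : Fin n → ℝ) : Fin (n + 1) → ℝ := Fin.snoc u 1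

/-- The 3×4 matrix `(A b)` with left 3×3 block `A` and last column `b`. -/
def cam (A : Matrix (Fin 3) (Fin 3) ℝ) (b : Fin 3 → ℝ) : Matrix (Fin 3) (Fin 4) ℝ :=
  Matrix.of fun i => Fin.snoc (A i) (b i)

/-- The left 3×3 block of a 3×4 matrix. -/
def leftBlock (P : Matrix (Fin 3) (Fin 4) ℝ) : Matrix (Fin 3) (Fin 3) ℝ :=
  P.submatrix id Fin.castSucc

/-- A (projective) camera is a real 3×4 matrix of rank 3. -/
def IsCamera (P : Matrix (Fin 3) (Fin 4) ℝ) : Prop := P.rank = 3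

/-- A finite camera: the left 3×3 block is nonsingular. -/
def IsFiniteCamera (P : Matrix (Fin 3) (Fin 4) ℝ) : Prop := IsUnit (leftBlock P).det

/-- Two cameras are coincident if their camera centers agree up to a nonzero scale;
for rank-3 cameras the center is the (one-dimensional) kernel, so this says the two
cameras share a common nonzero kernel vector. -/
def Coincident (P Q : Matrix (Fin 3) (Fin 4) ℝ) : Prop :=
  ∃ c : Fin 4 → ℝ, c ≠ 0 ∧ P.mulVec c = 0 ∧ Q.mulVec c = 0

/-- `u` is a nonzero scalar multiple of `v`. -/
def SimEq {n : ℕ} (u v : Fin n → ℝ) : Prop := ∃ c : ℝ, c ≠ 0 ∧ u = c • v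

/-- The skew-symmetric matrix `[v]ₓ` with `[v]ₓ w = v × w`. -/
def skew (v : Fin 3 → ℝ) : Matrix (Fin 3) (Fin 3) ℝ :=
  !![0, -v 2, v 1; v 2, 0, -v 0; -v 1, v 0, 0]

/-- `(x, y)` is `(A, b)`-irregular. -/
def Irregular (A : Matrix (Fin 3) (Fin 3) ℝ) (b : Fin 3 → ℝ) (x y : Fin 2 → ℝ) : Prop :=
  ((skew b * A).mulVec (hat x) = 0 ∧ Matrix.vecMul (hat y) (skew b) ≠ 0) ∨
  ((skew b * A).mulVec (hat x) ≠ 0 ∧ Matrix.vecMul (hat y) (skew b) = 0)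

theorem hat_ne_zero {n : ℕ} (u : Fin n → ℝ) : hat u ≠ 0 := fun h => by
  simpa [hat] using congrFun h (Fin.last n)

theorem cam_mulVec_hat (A : Matrix (Fin 3) (Fin 3) ℝ) (b u : Fin 3 → ℝ) :
    cam A b *ᵥ hat u = A *ᵥ u + b := by
  ext i
  simp only [mulVec, dotProduct, Fin.sum_univ_castSucc, cam, hat, of_apply, Fin.snoc_castSucc,
    Fin.snoc_last, mul_one, Pi.add_apply]

theorem cam_mulVec_single_last (A : Matrix (Fin 3) (Fin 3) ℝ) (b : Fin 3 → ℝ) :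
    cam A b *ᵥ Pi.single (Fin.last 3) 1 = b := by
  ext i
  simp only [mulVec_single_one, cam, col_apply, of_apply, Fin.snoc_last]

theorem leftBlock_cam (A : Matrix (Fin 3) (Fin 3) ℝ) (b : Fin 3 → ℝ) :
    leftBlock (cam A b) = A := by
  ext i j
  simp [leftBlock, cam]

theorem coincident_cam_zero (A B : Matrix (Fin 3) (Fin 3) ℝ) :
    Coincident (cam A 0) (cam B 0) :=
  ⟨Pi.single (Fin.last 3) 1, by simp, cam_mulVec_single_last A 0, cam_mulVec_single_last B 0⟩

theorem IsFiniteCamera.isCamera {P : Matrix (Fin 3) (Fin 4) ℝ} (h : IsFiniteCamera P) :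
    IsCamera P := by
  have hleft : (leftBlock P).rank = 3 := by
    simpa using rank_of_isUnit _ ((isUnit_iff_isUnit_det _).mpr h)
  exact le_antisymm P.rank_le_height (hleft.symm.trans_le (rank_submatrix_le P id Fin.castSucc))

theorem Matrix.mulVec_surjective_of_rank_eq {K m n : Type*} [Field K] [Fintype m] [Fintype n]
    {M : Matrix m n K} (h : M.rank = Fintype.card m) : Function.Surjective M.mulVec := by
  have : LinearMap.range M.mulVecLin = ⊤ :=
    Submodule.eq_top_of_finrank_eq (by rw [← Matrix.rank, h, Module.finrank_fintype_fun_eq_card])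
  exact LinearMap.range_eq_top.mp this

theorem Matrix.mem_span_of_mulVec_eq_zero {K m n : Type*} [Field K] [Fintype m] [Fintype n]
    {M : Matrix m n K} (hM : Function.Surjective M.mulVec)
    (hcard : Fintype.card n = Fintype.card m + 1) {c : n → K} (hc : c ≠ 0) (hMc : M *ᵥ c = 0)
    {v : n → K} (hMv : M *ᵥ v = 0) : v ∈ K ∙ c := by
  have hker : Module.finrank K (LinearMap.ker M.mulVecLin) = 1 := by
    have := LinearMap.finrank_range_add_finrank_ker M.mulVecLin
    rw [LinearMap.range_eq_top.mpr hM, finrank_top] at this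
    simp only [Module.finrank_fintype_fun_eq_card] at this
    omega
  have hspan : K ∙ c = LinearMap.ker M.mulVecLin :=
    Submodule.eq_of_le_of_finrank_eq
      ((Submodule.span_singleton_le_iff_mem _ _).mpr hMc) (by rw [finrank_span_singleton hc, hker])
  rw [hspan]
  exact hMv

theorem Matrix.exists_mulVec_mulVec_eq_of_ker_le {K l m n : Type*} [Field K] [Fintype m]
    [Fintype n] [DecidableEq m] {P : Matrix m n K} {Q : Matrix l n K}
    (hP : Function.Surjective P.mulVec)
    (hker : ∀ v, P *ᵥ v = 0 → Q *ᵥ v = 0) : ∃ B : Matrix l m K, ∀ v, B *ᵥ (P *ᵥ v) = Q *ᵥ v := by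
  obtain ⟨s, hs⟩ := P.mulVecLin.exists_rightInverse_of_surjective (LinearMap.range_eq_top.mpr hP)
  refine ⟨LinearMap.toMatrix' (Q.mulVecLin ∘ₗ s), fun v => ?_⟩
  have hPs : P *ᵥ (s (P *ᵥ v) - v) = 0 := by
    rw [mulVec_sub, ← mulVecLin_apply, ← LinearMap.comp_apply, hs]
    simp
  rw [← Matrix.toLin'_apply, Matrix.toLin'_toMatrix']
  exact sub_eq_zero.mp (mulVec_sub Q _ v ▸ hker _ hPs)

theorem Coincident.exists_isUnit_det_mulVec_eq {P₁ P₂ : Matrix (Fin 3) (Fin 4) ℝ}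
    (h₁ : IsCamera P₁) (h₂ : IsCamera P₂) (hco : Coincident P₁ P₂) :
    ∃ B : Matrix (Fin 3) (Fin 3) ℝ, IsUnit B.det ∧ ∀ v, B *ᵥ (P₁ *ᵥ v) = P₂ *ᵥ v := by
  obtain ⟨c, hc, hc₁, hc₂⟩ := hco
  have hs₁ : Function.Surjective P₁.mulVec := mulVec_surjective_of_rank_eq h₁
  obtain ⟨B, hB⟩ := exists_mulVec_mulVec_eq_of_ker_le hs₁ fun v hv => by
    obtain ⟨t, rfl⟩ :=
      Submodule.mem_span_singleton.mp (mem_span_of_mulVec_eq_zero hs₁ rfl hc hc₁ hv)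
    rw [mulVec_smul, hc₂, smul_zero]
  refine ⟨B, (isUnit_iff_isUnit_det B).mp (mulVec_surjective_iff_isUnit.mp fun u => ?_), hB⟩
  obtain ⟨v, rfl⟩ := mulVec_surjective_of_rank_eq h₂ u
  exact ⟨P₁ *ᵥ v, hB v⟩

/-- The four versions of the projective reconstruction problem with COINCIDENT
cameras are equivalent. -/
theorem stmt5 (m : ℕ) (x y : Fin m → Fin 2 → ℝ) :
    List.TFAE
      [ (∃ P₁ P₂ : Matrix (Fin 3) (Fin 4) ℝ, IsCamera P₁ ∧ IsCamera P₂ ∧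
          Coincident P₁ P₂ ∧
          ∃ w : Fin m → Fin 4 → ℝ, ∀ i, w i ≠ 0 ∧
            SimEq (P₁.mulVec (w i)) (hat (x i)) ∧ SimEq (P₂.mulVec (w i)) (hat (y i))),
        (∃ P₁ P₂ : Matrix (Fin 3) (Fin 4) ℝ, IsFiniteCamera P₁ ∧ IsFiniteCamera P₂ ∧
          Coincident P₁ P₂ ∧
          ∃ w : Fin m → Fin 4 → ℝ, ∀ i, w i ≠ 0 ∧
            SimEq (P₁.mulVec (w i)) (hat (x i)) ∧ SimEq (P₂.mulVec (w i)) (hat (y i))),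
        (∃ P₁ P₂ : Matrix (Fin 3) (Fin 4) ℝ, IsFiniteCamera P₁ ∧ IsFiniteCamera P₂ ∧
          Coincident P₁ P₂ ∧
          ∃ w : Fin m → Fin 3 → ℝ, ∀ i,
            SimEq (P₁.mulVec (hat (w i))) (hat (x i)) ∧
            SimEq (P₂.mulVec (hat (w i))) (hat (y i))),
        (∃ P₂ : Matrix (Fin 3) (Fin 4) ℝ, IsFiniteCamera P₂ ∧
          Coincident (cam 1 0) P₂ ∧
          ∃ w : Fin m → Fin 3 → ℝ, ∀ i,
            SimEq ((cam 1 0).mulVec (hat (w i))) (hat (x i)) ∧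
            SimEq (P₂.mulVec (hat (w i))) (hat (y i))) ] := by
  tfae_have 1 → 4 := by
    rintro ⟨P₁, P₂, h₁, h₂, hco, w, hw⟩
    obtain ⟨B, hB, hBP⟩ := hco.exists_isUnit_det_mulVec_eq h₁ h₂
    refine ⟨cam B 0, by rwa [IsFiniteCamera, leftBlock_cam], coincident_cam_zero 1 B,
      fun i => P₁ *ᵥ w i, fun i => ?_⟩
    simp only [cam_mulVec_hat, one_mulVec, add_zero, hBP]
    exact (hw i).2
  tfae_have 4 → 3 := fun ⟨P₂, hP₂, hco, w, hw⟩ =>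
    ⟨cam 1 0, P₂, by simp [IsFiniteCamera, leftBlock_cam], hP₂, hco, w, hw⟩
  tfae_have 3 → 2 := fun ⟨P₁, P₂, h₁, h₂, hco, w, hw⟩ =>
    ⟨P₁, P₂, h₁, h₂, hco, fun i => hat (w i), fun i => ⟨hat_ne_zero _, hw i⟩⟩
  tfae_have 2 → 1 := fun ⟨P₁, P₂, h₁, h₂, hco, w, hw⟩ =>
    ⟨P₁, P₂, h₁.isCamera, h₂.isCamera, hco, w, hw⟩
  tfae_finish
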